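/- Let ρ(y) = sup_{u∈U}⟨u, By⟩ with U ⊆ ℝ^m a nonempty compact convex set containing 0 in the interior of Bᵀ(cone of directions), B ∈ ℝ^{m×n} injective. If the polar cone of Bᵀcone(U) is {0}, then ρ is coercive. Specialize: for n = m = 1, B = 1, U = [−1,1], the condition holds and ρ(y) = |y| is coercive. -/

import Mathlib

/-!
The support function `σ_U(w) = sup_{u ∈ U} ⟨u, w⟩` of a compact set is continuous and positively
homogeneous, so `ρ = σ_U ∘ B` is too. If `ρ y ≤ 0` then `⟨Bᵀu, y⟩ ≤ 0` for every `u ∈ U`, i.e. `y`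
lies in the polar of `Bᵀ cone(U)`; hence `ρ > 0` away from `0`. The minimum `ε > 0` of `ρ` on the
unit sphere then gives `ρ y ≥ ε ‖y‖` by homogeneity, which is coercivity.
-/

open Matrix Filter Set

section Coercive

variable {E : Type*} [NormedAddCommGroup E] [NormedSpace ℝ E] [FiniteDimensional ℝ E]

theorem exists_pos_mul_norm_le_of_homogeneous {f : E → ℝ} (hf : Continuous f)
    (hhom : ∀ c : ℝ, 0 ≤ c → ∀ y, f (c • y) = c * f y) (hpos : ∀ y ≠ 0, 0 < f y) :
    ∃ ε > 0, ∀ y, ε * ‖y‖ ≤ f y := by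
  have hf0 : f 0 = 0 := by simpa using hhom 0 le_rfl 0
  rcases subsingleton_or_nontrivial E with hE | hE
  · exact ⟨1, one_pos, fun y => by simp [Subsingleton.elim y 0, hf0]⟩
  obtain ⟨y₀, hy₀, hmin⟩ := (isCompact_sphere (0 : E) 1).exists_isMinOn
    (NormedSpace.sphere_nonempty.mpr zero_le_one) hf.continuousOn
  refine ⟨f y₀, hpos y₀ (ne_zero_of_mem_unit_sphere ⟨y₀, hy₀⟩), fun y => ?_⟩
  rcases eq_or_ne y 0 with rfl | hy
  · simp [hf0]
  have hŷ : ‖y‖⁻¹ • y ∈ Metric.sphere (0 : E) 1 := by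
    rw [mem_sphere_zero_iff_norm, norm_smul, norm_inv, norm_norm, inv_mul_cancel₀ (norm_ne_zero_iff.mpr hy)]
  calc f y₀ * ‖y‖ ≤ ‖y‖ * f (‖y‖⁻¹ • y) := by rw [mul_comm]; gcongr; exact hmin hŷ
    _ = f y := by rw [← hhom _ (norm_nonneg y), smul_inv_smul₀ (norm_ne_zero_iff.mpr hy)]

theorem tendsto_cocompact_atTop_of_homogeneous {f : E → ℝ} (hf : Continuous f)
    (hhom : ∀ c : ℝ, 0 ≤ c → ∀ y, f (c • y) = c * f y) (hpos : ∀ y ≠ 0, 0 < f y) :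
    Tendsto f (cocompact E) atTop := by
  obtain ⟨ε, hε, hle⟩ := exists_pos_mul_norm_le_of_homogeneous hf hhom hpos
  exact tendsto_atTop_mono hle (tendsto_norm_cocompact_atTop.const_mul_atTop hε)

end Coercive

section SupportFunction

variable {ι κ : Type*} [Fintype ι] [Fintype κ] {U : Set (ι → ℝ)}

noncomputable def supportFn (U : Set (ι → ℝ)) (w : ι → ℝ) : ℝ :=
  sSup ((fun u => u ⬝ᵥ w) '' U)

def conicalHull (U : Set (ι → ℝ)) : Set (ι → ℝ) :=
  {x | ∃ c : ℝ, 0 ≤ c ∧ ∃ u ∈ U, x = c • u}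

def polarCone (K : Set (ι → ℝ)) : Set (ι → ℝ) :=
  {x | ∀ k ∈ K, x ⬝ᵥ k ≤ 0}

theorem le_supportFn (hU : IsCompact U) {u : ι → ℝ} (hu : u ∈ U) (w : ι → ℝ) :
    u ⬝ᵥ w ≤ supportFn U w :=
  le_csSup (hU.bddAbove_image (continuous_id.dotProduct continuous_const).continuousOn)
    (mem_image_of_mem _ hu)

theorem continuous_supportFn (hU : IsCompact U) : Continuous (supportFn U) :=
  hU.continuous_sSup (f := fun w u => u ⬝ᵥ w) (continuous_snd.dotProduct continuous_fst)

theorem supportFn_smul {c : ℝ} (hc : 0 ≤ c) (w : ι → ℝ) :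
    supportFn U (c • w) = c * supportFn U w := by
  rw [supportFn, supportFn, ← smul_eq_mul, ← Real.sSup_smul_of_nonneg hc, ← image_smul,
    image_image]
  simp only [dotProduct_smul, smul_eq_mul]

theorem supportFn_mulVec_pos (hU : IsCompact U) {B : Matrix ι κ ℝ}
    (hpolar : polarCone (Bᵀ.mulVec '' conicalHull U) = {0}) {y : κ → ℝ} (hy : y ≠ 0) :
    0 < supportFn U (B *ᵥ y) := by
  by_contra! hle
  refine hy (mem_singleton_iff.mp (hpolar ▸ ?_))
  rintro _ ⟨_, ⟨c, hc, u, hu, rfl⟩, rfl⟩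
  have hdual : y ⬝ᵥ Bᵀ *ᵥ u = u ⬝ᵥ B *ᵥ y := by
    rw [mulVec_transpose, dotProduct_comm, dotProduct_mulVec]
  rw [mulVec_smul, dotProduct_smul, hdual, smul_eq_mul]
  exact mul_nonpos_of_nonneg_of_nonpos hc ((le_supportFn hU hu _).trans hle)

end SupportFunction

theorem stmt_14 :
    (∀ (m n : ℕ) (U : Set (Fin m → ℝ)), U.Nonempty → IsCompact U → Convex ℝ U →
      ∀ (B : Matrix (Fin m) (Fin n) ℝ), Function.Injective B.mulVec →
      ∀ (ρ : (Fin n → ℝ) → ℝ),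
        (∀ y, ρ y = sSup {v : ℝ | ∃ u ∈ U, v = u ⬝ᵥ B.mulVec y}) →
        ({x : Fin n → ℝ | ∀ k ∈ (fun u => B.transpose.mulVec u) ''
            {x : Fin m → ℝ | ∃ c : ℝ, 0 ≤ c ∧ ∃ u ∈ U, x = c • u}, x ⬝ᵥ k ≤ 0}
          = {0}) →
        Tendsto ρ (cocompact _) atTop) ∧
    ({x : ℝ | ∀ k ∈ (fun u : ℝ => u) ''
        {x : ℝ | ∃ c : ℝ, 0 ≤ c ∧ ∃ u ∈ Set.Icc (-1 : ℝ) 1, x = c • u}, x * k ≤ 0}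
      = {0}) ∧
    Tendsto (fun y : ℝ => |y|) (cocompact ℝ) atTop := by
  refine ⟨fun m n U _ hU _ B _ ρ hρ hpolar => ?_, ?_, ?_⟩
  · obtain rfl : ρ = fun y => supportFn U (B *ᵥ y) := by
      funext y
      rw [hρ, supportFn]
      congr 1
      ext v
      simp [eq_comm]
    exact tendsto_cocompact_atTop_of_homogeneous
      ((continuous_supportFn hU).comp (Continuous.matrix_mulVec continuous_const continuous_id))
      (fun c hc y => by rw [mulVec_smul, supportFn_smul hc])
      (fun y hy => supportFn_mulVec_pos hU hpolar hy)
  · ext x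
    refine ⟨fun h => ?_, fun hx k _ => by simp [mem_singleton_iff.mp hx]⟩
    have h₁ : x * 1 ≤ 0 := h 1 ⟨1, ⟨1, zero_le_one, 1, by norm_num, by norm_num⟩, rfl⟩
    have h₂ : x * -1 ≤ 0 := h (-1) ⟨-1, ⟨1, zero_le_one, -1, by norm_num, by norm_num⟩, rfl⟩
    exact mem_singleton_iff.mpr (by linarith)
  · exact tendsto_norm_cocompact_atTop.congr Real.norm_eq_abs
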